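/- arXiv:1604.07089 — 2 statements merged into one kernel-verified Lean document; each statement's English description precedes it below -/
import Mathlib

section
/- Let p be a prime and w = w_{μ−1}⋯w_0 ∈ W a word of length μ. Then T̄_w(x)·T̄_{w_{LR}}(x) − T̄_{w_L}(x)·T̄_{w_R}(x) = α·x^{μ−1}, where α = p^{μ−2} · (w_{μ−1}/(w_{μ−1}+1)) · ((p−w_0−1)/(w_0+1)) · ∏_{d=2}^{p} d^{−2|w'|_{d−1}}, and w' = w_{μ−2}⋯w_1 is the word obtained from w by removing its leftmost and rightmost letters (|w'|_{d−1} counting occurrences of the single digit d−1 in w'). Equivalently, r_w(x) = 1 + α·x^{μ−1}/(T̄_{w_L}(x)·T̄_{w_R}(x)). -/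
open Finset

/-- `theta p j n` is the number of `t ∈ {0,…,n}` with `ν_p (binom n t) = j`. -/
def theta (p j n : ℕ) : ℕ :=
  ((Finset.range (n + 1)).filter fun t => padicValNat p (n.choose t) = j).card

/-- the base-`p` digit of `n` at position `i`. -/
def digit (p n i : ℕ) : ℕ := n / p ^ i % p

/-- Words over `{0,…,p−1}` are represented as lists, least significant (rightmost) letter
first; `wordCount p w n` is the number of occurrences of `w` as a factor of the base-`p`
expansion of `n` (padded with leading zeros). -/
noncomputable def wordCount (p : ℕ) (w : List ℕ) (n : ℕ) : ℕ :=
  Set.ncard {i : ℕ | ∀ k < w.length, digit p n (i + k) = w.getD k 0}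

/-- membership in the set `W` of admissible words: length ≥ 2, letters `< p`,
leftmost letter (last entry of the list) nonzero, rightmost letter (head) ≠ p−1. -/
def Adm (p : ℕ) (w : List ℕ) : Prop :=
  2 ≤ w.length ∧ (∀ a ∈ w, a < p) ∧ w.getD (w.length - 1) 0 ≠ 0 ∧ w.getD 0 0 ≠ p - 1

/-- membership in `W_j`. -/
def AdmJ (p j : ℕ) (w : List ℕ) : Prop := Adm p w ∧ w.length ≤ j + 1

/-- membership in `W̃`: nonempty words with letters `< p` and nonzero leftmost letter. -/
def Wt (p : ℕ) (w : List ℕ) : Prop :=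
  w ≠ [] ∧ (∀ a ∈ w, a < p) ∧ w.getD (w.length - 1) 0 ≠ 0

/-- The polynomial `T_n(x) = Σ_{t=0}^n x^{ν_p(binom n t)}`. -/
noncomputable def Tpoly (p n : ℕ) : Polynomial ℤ :=
  ∑ t ∈ Finset.range (n + 1), Polynomial.X ^ padicValNat p (n.choose t)

/-- right truncation: remove the rightmost letter. -/
def rightT (w : List ℕ) : List ℕ := w.tail

/-- left truncation: remove the leftmost letter together with the zeros following it. -/
def leftT (w : List ℕ) : List ℕ := ((w.dropLast).reverse.dropWhile (· = 0)).reverse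

/-- the common value `w_{LR} = (w_L)_R = (w_R)_L`. -/
def lrT (w : List ℕ) : List ℕ := leftT w.tail

/-- `T̄_v = T_{(v)_p}/θ_p(0,(v)_p)` as a rational function over `ℚ`. -/
noncomputable def TbarR (p : ℕ) (v : List ℕ) : RatFunc ℚ :=
  algebraMap (Polynomial ℚ) (RatFunc ℚ) ((Tpoly p (Nat.ofDigits p v)).map (Int.castRingHom ℚ)) /
    (theta p 0 (Nat.ofDigits p v) : RatFunc ℚ)

/-- the rational function `r_w`. -/
noncomputable def rFun (p : ℕ) (w : List ℕ) : RatFunc ℚ :=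
  TbarR p w * TbarR p (lrT w) / (TbarR p (rightT w) * TbarR p (leftT w))

/-- `T̄_v` as a power series over `ℚ`. -/
noncomputable def TbarS (p : ℕ) (v : List ℕ) : PowerSeries ℚ :=
  (((Tpoly p (Nat.ofDigits p v)).map (Int.castRingHom ℚ) : Polynomial ℚ) : PowerSeries ℚ) *
    (PowerSeries.C (R := ℚ) (theta p 0 (Nat.ofDigits p v) : ℚ))⁻¹

/-- the power series expansion of `r_w` at `0`. -/
noncomputable def rSer (p : ℕ) (w : List ℕ) : PowerSeries ℚ :=
  TbarS p w * TbarS p (lrT w) * (TbarS p (rightT w) * TbarS p (leftT w))⁻¹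

/-- `T̄_v` as a polynomial over `ℚ`. -/
noncomputable def TbarP (p : ℕ) (v : List ℕ) : Polynomial ℚ :=
  ((theta p 0 (Nat.ofDigits p v) : ℚ))⁻¹ • ((Tpoly p (Nat.ofDigits p v)).map (Int.castRingHom ℚ))

/-- formal logarithm of a power series with constant term 1. -/
noncomputable def logPS {K : Type*} [Field K] (f : PowerSeries K) : PowerSeries K :=
  PowerSeries.mk fun n => ∑ k ∈ Finset.range (n + 1),
    ((-1 : K) ^ (k + 1) / k) * PowerSeries.coeff (R := K) n ((f - 1) ^ k)

/-- formal exponential of a power series with constant term 0. -/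
noncomputable def expPS {K : Type*} [Field K] (f : PowerSeries K) : PowerSeries K :=
  PowerSeries.mk fun n => ∑ k ∈ Finset.range (n + 1),
    ((k.factorial : K))⁻¹ * PowerSeries.coeff (R := K) n (f ^ k)

/-- integer powers of a power series over a field. -/
noncomputable def fpow {K : Type*} [Field K] (f : PowerSeries K) (z : ℤ) : PowerSeries K :=
  if 0 ≤ z then f ^ z.toNat else f⁻¹ ^ (-z).toNat

/-- sum of base-`p` digits. -/
def digitSum (p n : ℕ) : ℕ := (Nat.digits p n).sum

/-!
Write `n = a + p m` with a digit `a < p`. Sorting the `t ≤ n` by whether the lowest digit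
produces a carry (Legendre's digit-sum formula) gives `(T_n, U_n) = M_a (T_m, U_m)`, where the
companion polynomial `U_n` counts carries in the presence of an incoming carry and
`M_a = [[a + 1, (p - 1 - a) x], [a, (p - a) x]]` has determinant `p x`.
Expanding `T_w` and `T_{w_L}` by one step, `T_w T_{w_LR} - T_{w_L} T_{w_R}` becomes
`(p - 1 - w_0) x` times the determinant of the pairs for `w_LR` and `w_R`, which equals
`w_{μ-1} (p x)^{μ-2}`. Normalizing by the constant terms `θ_p(0, (v)_p) = ∏ (v_i + 1)` gives `α`.
-/

open Polynomial
open scoped Nat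

lemma digitSum_add_mul {p a : ℕ} (hp : 1 < p) (m : ℕ) (ha : a < p) :
    digitSum p (a + p * m) = a + digitSum p m := by
  rcases Nat.eq_zero_or_pos (a + p * m) with h | h
  · obtain ⟨rfl, rfl⟩ : a = 0 ∧ m = 0 := by
      simpa [(zero_lt_one.trans hp).ne'] using h
    simp [digitSum]
  · rw [digitSum, Nat.digits_def' hp h, Nat.add_mul_mod_self_left, Nat.mod_eq_of_lt ha,
      Nat.add_mul_div_left _ _ (zero_lt_one.trans hp), Nat.div_eq_of_lt ha, zero_add,
      List.sum_cons, digitSum]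

lemma factorial_eq_pow_mul_choose_mul {c n t : ℕ} (hc : c ≤ 1) (h : t + c ≤ n) :
    n ! = n ^ c * (n - c).choose t * t ! * (n - c - t)! := by
  rw [mul_assoc, mul_assoc, ← mul_assoc ((n - c).choose t),
    Nat.choose_mul_factorial_mul_factorial (by omega)]
  interval_cases c
  · simp
  · rw [pow_one, Nat.mul_factorial_pred (by omega)]

section Valuation

variable {p : ℕ} [hp : Fact p.Prime]

/-- For `c ∈ {0, 1}` this counts the carries in the base-`p` addition `t + (n - c - t) + c`,
so `c` plays the role of an incoming carry. -/
def carryVal (p c n t : ℕ) : ℕ := padicValNat p (n ^ c * (n - c).choose t)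

lemma sub_one_mul_carryVal {c n t : ℕ} (hc : c ≤ 1) (h : t + c ≤ n) :
    (p - 1) * carryVal p c n t + digitSum p n
      = digitSum p t + digitSum p (n - c - t) + c := by
  have key := factorial_eq_pow_mul_choose_mul hc h
  have hX : n ^ c * (n - c).choose t ≠ 0 := by
    intro h0
    exact Nat.factorial_ne_zero n (by simp [key, h0])
  have hn := sub_one_mul_padicValNat_factorial (p := p) n
  rw [key, padicValNat.mul (mul_ne_zero hX (Nat.factorial_ne_zero _)) (Nat.factorial_ne_zero _),
    padicValNat.mul hX (Nat.factorial_ne_zero _), Nat.mul_add, Nat.mul_add,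
    sub_one_mul_padicValNat_factorial, sub_one_mul_padicValNat_factorial] at hn
  have := Nat.digit_sum_le p n
  have := Nat.digit_sum_le p t
  have := Nat.digit_sum_le p (n - c - t)
  unfold carryVal digitSum
  omega

lemma carryVal_add_mul_of_le {c a b m s : ℕ} (hc : c ≤ 1) (hba : b + c ≤ a) (ha : a < p)
    (hs : s ≤ m) : carryVal p c (a + p * m) (b + p * s) = carryVal p 0 m s := by
  have hp1 := hp.out.one_lt
  have hms : p * (m - s) + p * s = p * m := by rw [← Nat.mul_add, Nat.sub_add_cancel hs]
  have e := sub_one_mul_carryVal (p := p) hc (show b + p * s + c ≤ a + p * m by omega)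
  have e₀ := sub_one_mul_carryVal (p := p) zero_le_one (show s + 0 ≤ m by omega)
  rw [show a + p * m - c - (b + p * s) = (a - c - b) + p * (m - s) by omega,
    digitSum_add_mul hp1 _ ha, digitSum_add_mul hp1 _ (by omega),
    digitSum_add_mul hp1 _ (by omega)] at e
  simp only [Nat.sub_zero] at e₀
  exact Nat.eq_of_mul_eq_mul_left (by omega : 0 < p - 1) (by omega)

lemma carryVal_add_mul_of_lt {c a b m s : ℕ} (hc : c ≤ 1) (hab : a < b + c) (hb : b < p)
    (hs : s < m) : carryVal p c (a + p * m) (b + p * s) = carryVal p 1 m s + 1 := by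
  have hp1 := hp.out.one_lt
  have hms : p * (m - 1 - s) + p * s + p = p * m := by
    rw [← Nat.mul_add, ← Nat.mul_succ]; congr 1; omega
  have e := sub_one_mul_carryVal (p := p) hc (show b + p * s + c ≤ a + p * m by omega)
  have e₁ := sub_one_mul_carryVal (p := p) le_rfl (show s + 1 ≤ m by omega)
  rw [show a + p * m - c - (b + p * s) = (p + a - c - b) + p * (m - 1 - s) by omega,
    digitSum_add_mul hp1 _ (by omega), digitSum_add_mul hp1 _ hb,
    digitSum_add_mul hp1 _ (by omega)] at e
  exact Nat.eq_of_mul_eq_mul_left (by omega : 0 < p - 1) (by rw [Nat.mul_add]; omega)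

end Valuation

lemma Finset.sum_range_mul {M : Type*} [AddCommMonoid M] (f : ℕ → M) (p m : ℕ) :
    ∑ t ∈ range (p * m), f t = ∑ s ∈ range m, ∑ b ∈ range p, f (b + p * s) := by
  induction m with
  | zero => simp
  | succ m ih =>
    rw [Nat.mul_succ, sum_range_add, ih, sum_range_succ]
    simp only [Nat.add_comm (p * m)]

noncomputable def carryPoly (p c n : ℕ) : ℤ[X] :=
  ∑ t ∈ range (n + 1 - c), X ^ carryVal p c n t

lemma Tpoly_eq_carryPoly (p n : ℕ) : Tpoly p n = carryPoly p 0 n := by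
  simp [Tpoly, carryPoly, carryVal]

lemma carryPoly_zero_zero (p : ℕ) : carryPoly p 0 0 = 1 := by simp [carryPoly, carryVal]

lemma carryPoly_one_zero (p : ℕ) : carryPoly p 1 0 = 0 := by simp [carryPoly]

section Recurrence

variable {p : ℕ} [Fact p.Prime]

lemma carryPoly_add_mul {c a : ℕ} (m : ℕ) (hc : c ≤ 1) (ha : a < p) :
    carryPoly p c (a + p * m)
      = (a + 1 - c) • carryPoly p 0 m + (p - (a + 1 - c)) • (X * carryPoly p 1 m) := by
  set k := a + 1 - c with hk
  have hkp : k ≤ p := by omega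
  have hlow (s : ℕ) (hs : s < m) :
      ∑ b ∈ range p, (X : ℤ[X]) ^ carryVal p c (a + p * m) (b + p * s)
        = k • X ^ carryVal p 0 m s + (p - k) • (X * X ^ carryVal p 1 m s) := by
    have hle : ∑ b ∈ range k, (X : ℤ[X]) ^ carryVal p c (a + p * m) (b + p * s)
        = k • X ^ carryVal p 0 m s := by
      rw [sum_congr rfl fun b hb => by
          rw [carryVal_add_mul_of_le hc (by simp at hb; omega) ha hs.le],
        sum_const, card_range]
    have hgt : ∑ x ∈ range (p - k), (X : ℤ[X]) ^ carryVal p c (a + p * m) (k + x + p * s)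
        = (p - k) • (X * X ^ carryVal p 1 m s) := by
      rw [sum_congr rfl fun x hx => by
          rw [carryVal_add_mul_of_lt hc (by omega) (by simp at hx; omega) hs, pow_succ'],
        sum_const, card_range]
    rw [show range p = range (k + (p - k)) by rw [Nat.add_sub_cancel' hkp], sum_range_add,
      hle, hgt]
  have htop : ∑ j ∈ range k, (X : ℤ[X]) ^ carryVal p c (a + p * m) (p * m + j)
      = k • X ^ carryVal p 0 m m := by
    rw [sum_congr rfl fun j hj => by
        rw [Nat.add_comm (p * m), carryVal_add_mul_of_le hc (by simp at hj; omega) ha le_rfl],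
      sum_const, card_range]
  unfold carryPoly
  rw [show a + p * m + 1 - c = p * m + k by omega, sum_range_add, Finset.sum_range_mul,
    sum_congr rfl fun s hs => hlow s (mem_range.mp hs), htop, Nat.sub_zero, Nat.add_sub_cancel,
    sum_range_succ, sum_add_distrib]
  simp only [smul_add, smul_sum, mul_sum]
  abel

lemma carryPoly_zero_add_mul {a : ℕ} (m : ℕ) (ha : a < p) :
    carryPoly p 0 (a + p * m)
      = ((a : ℤ[X]) + 1) * carryPoly p 0 m
        + ((p : ℤ[X]) - 1 - (a : ℤ[X])) * X * carryPoly p 1 m := by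
  rw [carryPoly_add_mul m zero_le_one ha, nsmul_eq_mul, nsmul_eq_mul, Nat.sub_zero,
    Nat.cast_sub (by omega : a + 1 ≤ p)]
  push_cast
  ring

lemma carryPoly_one_add_mul {a : ℕ} (m : ℕ) (ha : a < p) :
    carryPoly p 1 (a + p * m)
      = (a : ℤ[X]) * carryPoly p 0 m + ((p : ℤ[X]) - (a : ℤ[X])) * X * carryPoly p 1 m := by
  rw [carryPoly_add_mul m le_rfl ha, nsmul_eq_mul, nsmul_eq_mul, Nat.add_sub_cancel,
    Nat.cast_sub ha.le]
  ring

lemma carryPoly_casoratian {c : ℕ} (hc : c < p) (u : List ℕ) (hu : ∀ a ∈ u, a < p) :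
    carryPoly p 0 (Nat.ofDigits p u) * carryPoly p 1 (Nat.ofDigits p (u ++ [c]))
      - carryPoly p 0 (Nat.ofDigits p (u ++ [c])) * carryPoly p 1 (Nat.ofDigits p u)
      = (c : ℤ[X]) * ((p : ℤ[X]) * X) ^ u.length := by
  induction u with
  | nil =>
    rw [List.nil_append, Nat.ofDigits_nil, show Nat.ofDigits p [c] = c + p * 0 by simp,
      carryPoly_zero_add_mul _ hc, carryPoly_one_add_mul _ hc, carryPoly_zero_zero,
      carryPoly_one_zero, List.length_nil, pow_zero]
    ring
  | cons a u ih =>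
    have ha : a < p := hu a List.mem_cons_self
    rw [List.cons_append, Nat.ofDigits_cons, Nat.ofDigits_cons, carryPoly_zero_add_mul _ ha,
      carryPoly_one_add_mul _ ha, carryPoly_zero_add_mul _ ha, carryPoly_one_add_mul _ ha,
      List.length_cons, pow_succ]
    linear_combination ((p : ℤ[X]) * X) * ih fun x hx => hu x (List.mem_cons_of_mem a hx)

lemma carryPoly_cons_append_mul_sub {b c : ℕ} (hb : b < p) (hc : c < p) (u : List ℕ)
    (hu : ∀ a ∈ u, a < p) :
    carryPoly p 0 (Nat.ofDigits p (b :: (u ++ [c]))) * carryPoly p 0 (Nat.ofDigits p u)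
      - carryPoly p 0 (Nat.ofDigits p (b :: u)) * carryPoly p 0 (Nat.ofDigits p (u ++ [c]))
      = (c : ℤ[X]) * ((p : ℤ[X]) - 1 - (b : ℤ[X])) * X * ((p : ℤ[X]) * X) ^ u.length := by
  rw [Nat.ofDigits_cons, Nat.ofDigits_cons, carryPoly_zero_add_mul _ hb,
    carryPoly_zero_add_mul _ hb]
  linear_combination (((p : ℤ[X]) - 1 - (b : ℤ[X])) * X) * carryPoly_casoratian hc u hu

lemma coeff_zero_carryPoly_ofDigits (v : List ℕ) (hv : ∀ a ∈ v, a < p) :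
    (carryPoly p 0 (Nat.ofDigits p v)).coeff 0 = ((v.map (· + 1)).prod : ℕ) := by
  induction v with
  | nil => simp [carryPoly_zero_zero]
  | cons a v ih =>
    rw [Nat.ofDigits_cons, carryPoly_zero_add_mul _ (hv a List.mem_cons_self),
      coeff_add, mul_coeff_zero, mul_coeff_zero, mul_coeff_zero, coeff_X_zero,
      ih fun x hx => hv x (List.mem_cons_of_mem a hx)]
    simp

end Recurrence

lemma theta_zero_eq_coeff_zero (p n : ℕ) : (theta p 0 n : ℤ) = (Tpoly p n).coeff 0 := by
  rw [theta, Tpoly, finsetSum_coeff, card_filter]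
  push_cast
  refine sum_congr rfl fun t _ => ?_
  rw [coeff_X_pow]
  split_ifs <;> simp_all [eq_comm]

section Normalized

variable {p : ℕ} [Fact p.Prime]

lemma theta_zero_ofDigits (v : List ℕ) (hv : ∀ a ∈ v, a < p) :
    theta p 0 (Nat.ofDigits p v) = (v.map (· + 1)).prod := by
  have h := theta_zero_eq_coeff_zero p (Nat.ofDigits p v)
  rwa [Tpoly_eq_carryPoly, coeff_zero_carryPoly_ofDigits v hv, Nat.cast_inj] at h

lemma TbarP_eq_smul (v : List ℕ) (hv : ∀ a ∈ v, a < p) :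
    TbarP p v = (((v.map (· + 1)).prod : ℕ) : ℚ)⁻¹ •
      (carryPoly p 0 (Nat.ofDigits p v)).map (Int.castRingHom ℚ) := by
  rw [TbarP, theta_zero_ofDigits v hv, Tpoly_eq_carryPoly]

lemma TbarP_cons_append_mul_sub {b c : ℕ} {u : List ℕ} (hw : ∀ a ∈ b :: (u ++ [c]), a < p) :
    TbarP p (b :: (u ++ [c])) * TbarP p u - TbarP p (b :: u) * TbarP p (u ++ [c])
      = C ((p : ℚ) ^ u.length * ((c : ℚ) / (c + 1)) * (((p : ℚ) - b - 1) / (b + 1))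
          * ((((u.map (· + 1)).prod : ℕ) : ℚ) ^ 2)⁻¹) * X ^ (u.length + 1) := by
  have hbu : ∀ a ∈ b :: u, a < p := fun a ha => hw a (by simp at ha ⊢; tauto)
  have huc : ∀ a ∈ u ++ [c], a < p := fun a ha => hw a (List.mem_cons_of_mem b ha)
  have hu : ∀ a ∈ u, a < p := fun a ha => huc a (List.mem_append_left _ ha)
  have hcore := congrArg (Polynomial.map (Int.castRingHom ℚ))
    (carryPoly_cons_append_mul_sub (hbu b List.mem_cons_self) (huc c (by simp)) u hu)
  simp only [Polynomial.map_sub, Polynomial.map_mul, Polynomial.map_pow, Polynomial.map_natCast,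
    Polynomial.map_one, Polynomial.map_X] at hcore
  have hθ : ((b :: (u ++ [c])).map (· + 1)).prod * (u.map (· + 1)).prod
      = ((b :: u).map (· + 1)).prod * ((u ++ [c]).map (· + 1)).prod := by
    simp only [List.map_cons, List.map_append, List.prod_cons, List.prod_append]
    ring
  have hrhs : (c : ℚ[X]) * ((p : ℚ[X]) - 1 - (b : ℚ[X])) * X * ((p : ℚ[X]) * X) ^ u.length
      = C ((c : ℚ) * ((p : ℚ) - 1 - b) * (p : ℚ) ^ u.length) * X ^ (u.length + 1) := by
    simp only [map_mul, map_sub, map_pow, map_natCast, map_one]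
    ring
  rw [TbarP_eq_smul _ hw, TbarP_eq_smul _ hu, TbarP_eq_smul _ hbu, TbarP_eq_smul _ huc,
    smul_mul_smul_comm, smul_mul_smul_comm, ← mul_inv, ← mul_inv, ← Nat.cast_mul,
    ← Nat.cast_mul, hθ, ← smul_sub, hcore, hrhs, smul_eq_C_mul, ← mul_assoc, ← C_mul]
  have hP : (((u.map (· + 1)).prod : ℕ) : ℚ) ≠ 0 := by
    rw [Nat.cast_ne_zero]
    exact List.prod_ne_zero (by simp)
  congr 2
  simp only [List.map_cons, List.map_append, List.prod_cons, List.prod_append, List.map_nil,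
    List.prod_nil, Nat.cast_mul]
  push_cast
  field_simp
  ring

end Normalized

lemma Nat.ofDigits_rdropWhile_eq_zero (b : ℕ) (l : List ℕ) :
    Nat.ofDigits b (l.rdropWhile (· = 0)) = Nat.ofDigits b l := by
  have hzero : l.rtakeWhile (· = 0) = List.replicate (l.rtakeWhile (· = 0)).length 0 :=
    List.eq_replicate_iff.mpr ⟨rfl, fun x hx => by simpa using List.mem_rtakeWhile_imp hx⟩
  conv_rhs => rw [← List.rdropWhile_append_rtakeWhile (p := (· = 0)) (l := l), hzero,
    Nat.ofDigits_append_replicate_zero]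

lemma ofDigits_leftT (p : ℕ) (w : List ℕ) :
    Nat.ofDigits p (leftT w) = Nat.ofDigits p w.dropLast :=
  Nat.ofDigits_rdropWhile_eq_zero p w.dropLast

lemma TbarP_congr {p : ℕ} {v v' : List ℕ} (h : Nat.ofDigits p v = Nat.ofDigits p v') :
    TbarP p v = TbarP p v' := by
  rw [TbarP, TbarP, h]

lemma List.exists_eq_cons_append_singleton {α : Type*} {w : List α} (h : 2 ≤ w.length) :
    ∃ b u c, w = b :: (u ++ [c]) := by
  obtain _ | ⟨b, _ | ⟨a, w'⟩⟩ := w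
  · simp at h
  · simp at h
  · exact ⟨b, (a :: w').dropLast, (a :: w').getLast (List.cons_ne_nil a w'),
      by rw [List.dropLast_append_getLast]⟩

lemma prod_map_add_one_eq_prod_Icc_pow_count {p : ℕ} (u : List ℕ) (hu : ∀ a ∈ u, a < p) :
    (u.map (· + 1)).prod = ∏ d ∈ Icc 2 p, d ^ u.count (d - 1) := by
  have hsub : (u.map (· + 1)).toFinset ⊆ Icc 1 p := by
    intro d hd
    simp only [List.mem_toFinset, List.mem_map] at hd
    obtain ⟨a, ha, rfl⟩ := hd
    have := hu a ha
    simp only [mem_Icc]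
    omega
  calc (u.map (· + 1)).prod = ∏ d ∈ Icc 1 p, d ^ (u.map (· + 1)).count d :=
        prod_list_count_of_subset _ _ hsub
    _ = ∏ d ∈ Icc 1 p, d ^ u.count (d - 1) := by
        refine prod_congr rfl fun d hd => ?_
        obtain ⟨e, rfl⟩ : ∃ e, d = e + 1 := ⟨d - 1, by simp at hd; omega⟩
        rw [List.count_map_of_injective _ _ (add_left_injective 1), Nat.add_sub_cancel]
    _ = ∏ d ∈ Icc 2 p, d ^ u.count (d - 1) := by
        refine (prod_subset (Icc_subset_Icc_left one_le_two) fun d hd hd' => ?_).symm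
        simp only [mem_Icc] at hd hd'
        obtain rfl : d = 1 := by omega
        exact one_pow _

/-- The list `w` has its rightmost letter `w_0` first, so the leftmost letter `w_{μ−1}` is
`w.getD (w.length−1) 0` and `w' = w_{μ−2}⋯w_1` is `w.tail.dropLast`. -/
theorem stmt7 (p : ℕ) (hp : p.Prime) (w : List ℕ) (hw : Adm p w) :
    TbarP p w * TbarP p (lrT w) - TbarP p (leftT w) * TbarP p (rightT w) =
      Polynomial.C
        ((p : ℚ) ^ (w.length - 2) *
          ((w.getD (w.length - 1) 0 : ℚ) / ((w.getD (w.length - 1) 0 : ℚ) + 1)) *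
          (((p : ℚ) - (w.getD 0 0 : ℚ) - 1) / ((w.getD 0 0 : ℚ) + 1)) *
          ∏ d ∈ Finset.Icc 2 p, ((d : ℚ) ^ (2 * (w.tail.dropLast).count (d - 1)))⁻¹) *
        Polynomial.X ^ (w.length - 1) := by
  have := Fact.mk hp
  obtain ⟨hlen, hlt, -, -⟩ := hw
  obtain ⟨b, u, c, rfl⟩ := List.exists_eq_cons_append_singleton hlen
  have hu : ∀ a ∈ u, a < p := fun a ha => hlt a (by simp [ha])
  have hL : TbarP p (leftT (b :: (u ++ [c]))) = TbarP p (b :: u) := by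
    refine TbarP_congr ?_
    rw [ofDigits_leftT, ← List.cons_append, List.dropLast_concat]
  have hLR : TbarP p (lrT (b :: (u ++ [c]))) = TbarP p u := by
    refine TbarP_congr ?_
    rw [lrT, ofDigits_leftT, List.tail_cons, List.dropLast_concat]
  have hP : ∏ d ∈ Icc 2 p, ((d : ℚ) ^ (2 * u.count (d - 1)))⁻¹
      = ((((u.map (· + 1)).prod : ℕ) : ℚ) ^ 2)⁻¹ := by
    rw [prod_map_add_one_eq_prod_Icc_pow_count u hu, prod_inv_distrib, Nat.cast_prod, ← prod_pow]
    simp only [Nat.cast_pow, ← pow_mul, mul_comm]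
  rw [hL, hLR, rightT, List.tail_cons,
    TbarP_cons_append_mul_sub hlt]
  simp [hP]
end

section
/- Let p = 2 and n ≥ 0. Then 2·θ_2(1,n) = θ_2(0,n)·|n|_{10}, and 8·θ_2(2,n) = θ_2(0,n)·(−|n|_{10} + |n|_{10}² + 8·|n|_{100} + 2·|n|_{110}), where 10, 100, 110 denote the binary words read with leftmost letter first. -/
open Finset

/-!
By Legendre's formula `ν₂ (binom n t) = s t + s (n - t) - s n`, with `s` the binary digit sum,
is the number of carries in the binary addition of `t` and `n - t`. Splitting `t` by its last bit:
for odd `n` the last bits are `(0,1)` or `(1,0)` and carry nothing, so `θ(j, 2m+1) = 2 θ(j, m)`;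
for `n = 2m + 2` the last bits `(0,0)` give `θ(j, m+1)`, while `(1,1)` carry and leave an addition
`a + b = m` with an incoming carry. Additions with an incoming carry obey similar recurrences, and
`|2m + d|_w = |m|_w + [w is a suffix of 2m + d]`, so both identities follow by induction along the
binary expansion of `n`.
-/

section Digits

variable {p : ℕ}

theorem digit_zero (n : ℕ) : digit p n 0 = n % p := by
  simp [digit]

theorem digit_succ (n i : ℕ) : digit p n (i + 1) = digit p (n / p) i := by
  rw [digit, digit, pow_succ', Nat.div_div_eq_div_mul]

theorem lt_of_digit_ne_zero (hp : 1 < p) {n i : ℕ} (h : digit p n i ≠ 0) : i < n := by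
  have hle : p ^ i ≤ n := by
    by_contra hlt
    exact h (by rw [digit, Nat.div_eq_of_lt (not_le.mp hlt), Nat.zero_mod])
  exact (Nat.lt_pow_self hp).trans_le hle

theorem digitSum_mul_add (hp : 1 < p) {d : ℕ} (hd : d < p) (m : ℕ) :
    digitSum p (p * m + d) = digitSum p m + d := by
  rcases eq_or_ne d 0 with rfl | hd0
  · rcases eq_or_ne m 0 with rfl | hm0
    · simp [digitSum]
    · rw [digitSum, add_zero, ← zero_add (p * m), Nat.digits_add p hp 0 m hd (.inr hm0)]
      simp [digitSum]
  · rw [digitSum, add_comm, Nat.digits_add p hp d m hd (.inl hd0)]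
    simp [digitSum, add_comm]

theorem digitSum_two_mul (m : ℕ) : digitSum 2 (2 * m) = digitSum 2 m := by
  simpa using digitSum_mul_add one_lt_two two_pos m

theorem digitSum_two_mul_add_one (m : ℕ) : digitSum 2 (2 * m + 1) = digitSum 2 m + 1 :=
  digitSum_mul_add one_lt_two one_lt_two m

/-- `sub_one_mul_padicValNat_choose_eq_sub_sum_digits` without the truncated subtraction. -/
theorem sub_one_mul_padicValNat_choose_add_digitSum [Fact p.Prime] {n t : ℕ} (h : t ≤ n) :
    (p - 1) * padicValNat p (n.choose t) + digitSum p n = digitSum p t + digitSum p (n - t) := by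
  have hval : padicValNat p (n.choose t) + padicValNat p t.factorial +
      padicValNat p (n - t).factorial = padicValNat p n.factorial := by
    rw [← padicValNat.mul (Nat.choose_pos h).ne' (Nat.factorial_ne_zero _),
      ← padicValNat.mul (by positivity [Nat.choose_pos h]) (Nat.factorial_ne_zero _),
      Nat.choose_mul_factorial_mul_factorial h]
  have hmul := congrArg ((p - 1) * ·) hval
  simp only [mul_add, sub_one_mul_padicValNat_factorial] at hmul
  have := Nat.digit_sum_le p n
  have := Nat.digit_sum_le p t
  have := Nat.digit_sum_le p (n - t)
  unfold digitSum
  omega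

theorem digitSum_add_le [Fact p.Prime] (a b : ℕ) :
    digitSum p (a + b) ≤ digitSum p a + digitSum p b := by
  have hkummer := sub_one_mul_padicValNat_choose_add_digitSum (p := p) (Nat.le_add_right a b)
  rw [Nat.add_sub_cancel_left] at hkummer
  omega

theorem digitSum_one [hp : Fact p.Prime] : digitSum p 1 = 1 := by
  simp [digitSum, Nat.digits_of_lt p 1 one_ne_zero hp.out.one_lt]

end Digits

section WordCount

variable {p : ℕ} {w : List ℕ}

theorem Nat.ncard_setOf_eq_ncard_setOf_succ_add (P : ℕ → Prop) [Decidable (P 0)]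
    (hfin : {i | P (i + 1)}.Finite) :
    {i | P i}.ncard = {i | P (i + 1)}.ncard + if P 0 then 1 else 0 := by
  have hshift : {i | P i} \ {0} = Nat.succ '' {i | P (i + 1)} := by
    ext (_ | i) <;> simp
  rw [← Set.ncard_image_of_injective {i | P (i + 1)} Nat.succ_injective, ← hshift]
  split_ifs with h0
  · exact (Set.ncard_sdiff_singleton_add_one (s := {i | P i}) h0
      ((hshift ▸ hfin.image _).of_sdiff (Set.finite_singleton 0))).symm
  · rw [Set.sdiff_singleton_eq_self (s := {i | P i}) h0, add_zero]

theorem exists_getD_ne_zero_of_exists_mem (hw : ∃ a ∈ w, a ≠ 0) :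
    ∃ k < w.length, w.getD k 0 ≠ 0 := by
  obtain ⟨a, ha, ha0⟩ := hw
  obtain ⟨k, hk, rfl⟩ := List.mem_iff_getElem.mp ha
  exact ⟨k, hk, by rwa [List.getD_eq_getElem]⟩

theorem wordCount_zero_right (hw : ∃ a ∈ w, a ≠ 0) : wordCount p w 0 = 0 := by
  obtain ⟨k, hk, hne⟩ := exists_getD_ne_zero_of_exists_mem hw
  have hempty : {i | ∀ k < w.length, digit p 0 (i + k) = w.getD k 0} = ∅ :=
    Set.eq_empty_of_forall_notMem fun i hi => hne (by simpa [digit] using (hi k hk).symm)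
  rw [wordCount, hempty, Set.ncard_empty]

theorem wordCount_eq_wordCount_div_add (hp : 1 < p) (hw : ∃ a ∈ w, a ≠ 0) (n : ℕ) :
    wordCount p w n =
      wordCount p w (n / p) + if ∀ k < w.length, digit p n k = w.getD k 0 then 1 else 0 := by
  obtain ⟨k₀, hk₀, hne⟩ := exists_getD_ne_zero_of_exists_mem hw
  have hfin : {i | ∀ k < w.length, digit p (n / p) (i + k) = w.getD k 0}.Finite :=
    (Set.finite_Iio (n / p)).subset fun i hi =>
      (Nat.le_add_right i k₀).trans_lt (lt_of_digit_ne_zero hp ((hi k₀ hk₀).trans_ne hne))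
  unfold wordCount
  rw [Nat.ncard_setOf_eq_ncard_setOf_succ_add _
    (by simpa only [add_right_comm _ 1, digit_succ] using hfin)]
  simp only [add_right_comm _ 1, digit_succ, zero_add]

theorem wordCount_cons_mul_add_of_ne (hp : 1 < p) {d d' : ℕ} {v : List ℕ}
    (hw : ∃ a ∈ d :: v, a ≠ 0) (hd' : d' < p) (hne : d' ≠ d) (m : ℕ) :
    wordCount p (d :: v) (p * m + d') = wordCount p (d :: v) m := by
  rw [wordCount_eq_wordCount_div_add hp hw, if_neg, add_zero]
  · congr 1
    rw [add_comm, Nat.add_mul_div_left _ _ (by omega), Nat.div_eq_of_lt hd', zero_add]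
  · intro h
    apply hne
    simpa [digit_zero, Nat.add_mod, Nat.mod_eq_of_lt hd'] using h 0 (by simp)

theorem wordCount_cons_mul_add_self (hp : 1 < p) {d : ℕ} {v : List ℕ}
    (hw : ∃ a ∈ d :: v, a ≠ 0) (hd : d < p) (m : ℕ) :
    wordCount p (d :: v) (p * m + d) =
      wordCount p (d :: v) m + if ∀ k < v.length, digit p m k = v.getD k 0 then 1 else 0 := by
  have hdiv : (p * m + d) / p = m := by
    rw [add_comm, Nat.add_mul_div_left _ _ (by omega), Nat.div_eq_of_lt hd, zero_add]
  rw [wordCount_eq_wordCount_div_add hp hw, hdiv]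
  congr 2
  simp only [List.length_cons, Nat.forall_lt_succ_left, digit_zero, digit_succ, hdiv,
    List.getD_cons_zero, List.getD_cons_succ, Nat.add_mod, Nat.mul_mod_right, zero_add,
    Nat.mod_eq_of_lt hd, true_and]

theorem wordCount_w10_two_mul (m : ℕ) :
    wordCount 2 [0, 1] (2 * m) = wordCount 2 [0, 1] m + if m % 2 = 1 then 1 else 0 := by
  simpa [digit] using wordCount_cons_mul_add_self one_lt_two (v := [1]) (by simp) two_pos m

theorem wordCount_w100_two_mul (m : ℕ) :
    wordCount 2 [0, 0, 1] (2 * m) = wordCount 2 [0, 0, 1] m + if m % 4 = 2 then 1 else 0 := by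
  rw [← add_zero (2 * m), wordCount_cons_mul_add_self one_lt_two (by simp) two_pos]
  congr 2
  simp only [List.length_cons, List.length_nil, Nat.forall_lt_succ_left, List.getD_cons_zero,
    List.getD_cons_succ]
  simp [digit]
  omega

theorem wordCount_w110_two_mul (m : ℕ) :
    wordCount 2 [0, 1, 1] (2 * m) = wordCount 2 [0, 1, 1] m + if m % 4 = 3 then 1 else 0 := by
  rw [← add_zero (2 * m), wordCount_cons_mul_add_self one_lt_two (by simp) two_pos]
  congr 2
  simp only [List.length_cons, List.length_nil, Nat.forall_lt_succ_left, List.getD_cons_zero,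
    List.getD_cons_succ]
  simp [digit]
  omega

theorem wordCount_w10_two_mul_add_one (m : ℕ) :
    wordCount 2 [0, 1] (2 * m + 1) = wordCount 2 [0, 1] m :=
  wordCount_cons_mul_add_of_ne one_lt_two (by simp) one_lt_two one_ne_zero m

theorem wordCount_w100_two_mul_add_one (m : ℕ) :
    wordCount 2 [0, 0, 1] (2 * m + 1) = wordCount 2 [0, 0, 1] m :=
  wordCount_cons_mul_add_of_ne one_lt_two (by simp) one_lt_two one_ne_zero m

theorem wordCount_w110_two_mul_add_one (m : ℕ) :
    wordCount 2 [0, 1, 1] (2 * m + 1) = wordCount 2 [0, 1, 1] m :=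
  wordCount_cons_mul_add_of_ne one_lt_two (by simp) one_lt_two one_ne_zero m

end WordCount

section Theta

theorem sum_range_two_mul {M : Type*} [AddCommMonoid M] (f : ℕ → M) (N : ℕ) :
    ∑ t ∈ range (2 * N), f t =
      ∑ s ∈ range N, f (2 * s) + ∑ s ∈ range N, f (2 * s + 1) := by
  induction N with
  | zero => simp
  | succ N ih =>
    rw [show 2 * (N + 1) = 2 * N + 1 + 1 by ring, sum_range_succ, sum_range_succ, ih,
      sum_range_succ, sum_range_succ]
    abel

theorem card_filter_range_two_mul (P : ℕ → Prop) [DecidablePred P] (N : ℕ) :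
    #{t ∈ range (2 * N) | P t} =
      #{s ∈ range N | P (2 * s)} + #{s ∈ range N | P (2 * s + 1)} := by
  simp only [card_filter, sum_range_two_mul]

theorem card_filter_range_two_mul_add_one (P : ℕ → Prop) [DecidablePred P] (N : ℕ) :
    #{t ∈ range (2 * N + 1) | P t} =
      #{s ∈ range (N + 1) | P (2 * s)} + #{s ∈ range N | P (2 * s + 1)} := by
  simp only [card_filter, sum_range_succ, sum_range_two_mul]
  ring

theorem theta_two_eq_card_digitSum (j n : ℕ) :
    theta 2 j n =
      #{t ∈ range (n + 1) | digitSum 2 t + digitSum 2 (n - t) = digitSum 2 n + j} := by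
  unfold theta
  congr 1
  refine filter_congr fun t ht => ?_
  have hkummer :=
    sub_one_mul_padicValNat_choose_add_digitSum (p := 2) (Nat.le_of_lt_succ (mem_range.mp ht))
  rw [Nat.add_one_sub_one, one_mul] at hkummer
  omega

/-- The number of `t ≤ k` such that the binary addition of `t`, `k - t` and an incoming carry
produces `j` carries. -/
def thetaCarry (j k : ℕ) : ℕ :=
  #{t ∈ range (k + 1) | digitSum 2 t + digitSum 2 (k - t) + 1 = digitSum 2 (k + 1) + j}

theorem theta_two_mul_add_one (j m : ℕ) : theta 2 j (2 * m + 1) = 2 * theta 2 j m := by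
  rw [two_mul (theta 2 j m), theta_two_eq_card_digitSum, theta_two_eq_card_digitSum,
    show 2 * m + 1 + 1 = 2 * (m + 1) by ring, card_filter_range_two_mul]
  congr 1 <;> refine congrArg card (filter_congr fun s hs => ?_) <;> have := mem_range.mp hs
  · rw [show 2 * m + 1 - 2 * s = 2 * (m - s) + 1 by omega]
    simp only [digitSum_two_mul, digitSum_two_mul_add_one]
    omega
  · rw [show 2 * m + 1 - (2 * s + 1) = 2 * (m - s) by omega]
    simp only [digitSum_two_mul, digitSum_two_mul_add_one]
    omega

theorem theta_two_mul_succ (j m : ℕ) :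
    theta 2 j (2 * (m + 1)) = theta 2 j (m + 1) +
      #{t ∈ range (m + 1) | digitSum 2 t + digitSum 2 (m - t) + 2 = digitSum 2 (m + 1) + j} := by
  rw [theta_two_eq_card_digitSum, theta_two_eq_card_digitSum, card_filter_range_two_mul_add_one]
  congr 1 <;> refine congrArg card (filter_congr fun s hs => ?_) <;> have := mem_range.mp hs
  · rw [show 2 * (m + 1) - 2 * s = 2 * (m + 1 - s) by omega]
    simp only [digitSum_two_mul]
  · rw [show 2 * (m + 1) - (2 * s + 1) = 2 * (m - s) + 1 by omega]
    simp only [digitSum_two_mul, digitSum_two_mul_add_one]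
    omega

theorem theta_zero_two_mul (m : ℕ) : theta 2 0 (2 * m) = theta 2 0 m := by
  rcases m with _ | m
  · rfl
  rw [theta_two_mul_succ, card_eq_zero.mpr, add_zero]
  refine filter_eq_empty_iff.mpr fun t ht heq => ?_
  have hsub := digitSum_add_le (p := 2) t (m - t)
  have hsucc := digitSum_add_le (p := 2) m 1
  rw [Nat.add_sub_cancel' (Nat.le_of_lt_succ (mem_range.mp ht))] at hsub
  rw [digitSum_one] at hsucc
  omega

theorem theta_succ_two_mul_succ (j m : ℕ) :
    theta 2 (j + 1) (2 * (m + 1)) = theta 2 (j + 1) (m + 1) + thetaCarry j m := by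
  rw [theta_two_mul_succ, thetaCarry]
  congr 2
  refine filter_congr fun _ _ => ?_
  omega

theorem thetaCarry_two_mul (j l : ℕ) : thetaCarry j (2 * l) = theta 2 j (2 * l) := by
  rw [thetaCarry, theta_two_eq_card_digitSum]
  refine congrArg card (filter_congr fun _ _ => ?_)
  simp only [digitSum_two_mul_add_one, digitSum_two_mul]
  omega

theorem thetaCarry_zero_two_mul_add_one (l : ℕ) : thetaCarry 0 (2 * l + 1) = 0 := by
  refine card_eq_zero.mpr (filter_eq_empty_iff.mpr fun t ht heq => ?_)
  have hsub := digitSum_add_le (p := 2) t (2 * l + 1 - t)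
  have hsucc := digitSum_add_le (p := 2) l 1
  rw [Nat.add_sub_cancel' (Nat.le_of_lt_succ (mem_range.mp ht)), digitSum_two_mul_add_one] at hsub
  rw [show 2 * l + 1 + 1 = 2 * (l + 1) by ring, digitSum_two_mul] at heq
  rw [digitSum_one] at hsucc
  omega

theorem thetaCarry_succ_two_mul_add_one (j l : ℕ) :
    thetaCarry (j + 1) (2 * l + 1) = 2 * thetaCarry j l := by
  rw [two_mul (thetaCarry j l), thetaCarry, thetaCarry, show 2 * l + 1 + 1 = 2 * (l + 1) by ring,
    card_filter_range_two_mul]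
  congr 1 <;> refine congrArg card (filter_congr fun s hs => ?_) <;> have := mem_range.mp hs
  · rw [show 2 * l + 1 - 2 * s = 2 * (l - s) + 1 by omega]
    simp only [digitSum_two_mul, digitSum_two_mul_add_one]
    omega
  · rw [show 2 * l + 1 - (2 * s + 1) = 2 * (l - s) by omega]
    simp only [digitSum_two_mul, digitSum_two_mul_add_one]
    omega

end Theta

theorem theta_two_zero (n : ℕ) : theta 2 0 n = 2 ^ digitSum 2 n := by
  induction n using Nat.evenOddRec with
  | h0 => simp [theta, filter_singleton, digitSum]
  | h_even m ih => rw [theta_zero_two_mul, digitSum_two_mul, ih]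
  | h_odd m ih => rw [theta_two_mul_add_one, digitSum_two_mul_add_one, ih, pow_succ, mul_comm]

theorem thetaCarry_zero_two_mul (l : ℕ) : thetaCarry 0 (2 * l) = 2 ^ digitSum 2 l := by
  rw [thetaCarry_two_mul, theta_two_zero, digitSum_two_mul]

theorem two_mul_theta_two_one (n : ℕ) :
    2 * theta 2 1 n = 2 ^ digitSum 2 n * wordCount 2 [0, 1] n := by
  induction n using Nat.evenOddRec with
  | h0 => simp [theta, filter_singleton, wordCount_zero_right]
  | h_odd m ih =>
    rw [theta_two_mul_add_one, digitSum_two_mul_add_one,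
      wordCount_w10_two_mul_add_one, pow_succ, mul_left_comm, ih]
    ring
  | h_even m ih =>
    rcases m with _ | k
    · simpa using ih
    rw [theta_succ_two_mul_succ, mul_add, ih, digitSum_two_mul, wordCount_w10_two_mul]
    obtain ⟨l, rfl | rfl⟩ := Nat.even_or_odd' k
    · rw [thetaCarry_zero_two_mul, digitSum_two_mul_add_one, if_pos (by omega)]
      ring
    · rw [thetaCarry_zero_two_mul_add_one, if_neg (by omega)]
      ring

theorem two_mul_thetaCarry_one_two_mul (l : ℕ) :
    2 * thetaCarry 1 (2 * l) = 2 ^ digitSum 2 l * wordCount 2 [0, 1] (2 * l) := by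
  rw [thetaCarry_two_mul, two_mul_theta_two_one, digitSum_two_mul]

theorem eight_mul_theta_two_two (n : ℕ) :
    (8 * theta 2 2 n : ℤ) = 2 ^ digitSum 2 n *
      (-(wordCount 2 [0, 1] n : ℤ) + (wordCount 2 [0, 1] n : ℤ) ^ 2 +
        8 * (wordCount 2 [0, 0, 1] n : ℤ) + 2 * (wordCount 2 [0, 1, 1] n : ℤ)) := by
  induction n using Nat.evenOddRec with
  | h0 => simp [theta, filter_singleton, wordCount_zero_right]
  | h_odd m ih =>
    rw [theta_two_mul_add_one, digitSum_two_mul_add_one, wordCount_w10_two_mul_add_one,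
      wordCount_w100_two_mul_add_one, wordCount_w110_two_mul_add_one]
    push_cast
    linear_combination 2 * ih
  | h_even m ih =>
    rcases m with _ | k
    · simpa using ih
    rw [theta_succ_two_mul_succ, digitSum_two_mul, wordCount_w10_two_mul, wordCount_w100_two_mul,
      wordCount_w110_two_mul]
    obtain ⟨l, rfl | rfl⟩ := Nat.even_or_odd' k
    · have hcarry := two_mul_thetaCarry_one_two_mul l
      rw [wordCount_w10_two_mul] at hcarry
      rw [digitSum_two_mul_add_one, wordCount_w10_two_mul_add_one,
        wordCount_w100_two_mul_add_one, wordCount_w110_two_mul_add_one] at ih ⊢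
      zify at hcarry
      push_cast at ih ⊢
      split_ifs at hcarry ⊢ <;> first | omega | linear_combination ih + 4 * hcarry
    · rw [show 2 * l + 1 + 1 = 2 * (l + 1) by ring, digitSum_two_mul] at ih ⊢
      rw [thetaCarry_succ_two_mul_add_one]
      obtain ⟨r, rfl | rfl⟩ := Nat.even_or_odd' l
      · rw [thetaCarry_zero_two_mul]
        rw [digitSum_two_mul_add_one] at ih ⊢
        push_cast
        split_ifs <;> first | omega | linear_combination ih
      · rw [thetaCarry_zero_two_mul_add_one]
        push_cast
        split_ifs <;> first | omega | linear_combination ih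

/-- for `p = 2`, `2·θ_2(1,n) = θ_2(0,n)·|n|_{10}` and
`8·θ_2(2,n) = θ_2(0,n)·(−|n|_{10} + |n|_{10}² + 8|n|_{100} + 2|n|_{110})`.
(Lists carry the rightmost letter first: `10 = [0,1]`, `100 = [0,0,1]`, `110 = [0,1,1]`.) -/
theorem stmt18 (n : ℕ) :
    2 * theta 2 1 n = theta 2 0 n * wordCount 2 [0, 1] n ∧
    (8 * theta 2 2 n : ℤ) =
      (theta 2 0 n : ℤ) *
        (-(wordCount 2 [0, 1] n : ℤ) + (wordCount 2 [0, 1] n : ℤ) ^ 2 +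
          8 * (wordCount 2 [0, 0, 1] n : ℤ) + 2 * (wordCount 2 [0, 1, 1] n : ℤ)) := by
  rw [theta_two_zero]
  push_cast
  exact ⟨two_mul_theta_two_one n, eight_mul_theta_two_two n⟩
end
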